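/- For every f = (f, f_τ) and g = (g, g_τ) in T_loc and all α, β ∈ (a,b), the modified Wronskian satisfies the Lagrange identity V(f,g*)(β) − V(f,g*)(α) = ∫_α^β (f_τ(x) g(x)* − f(x) g_τ(x)*) dχ(x) + ∫_α^β (f_τ^{[1]}(x) g^{[1]}(x)* − f^{[1]}(x) g_τ^{[1]}(x)*) dς(x). -/

import Mathlib

open MeasureTheory Filter Set Topology

noncomputable section

/-- Complex conjugation. -/
def cg (z : ℂ) : ℂ := (starRingEnd ℂ) z

/-- The interval `(a,b)` (with possibly infinite endpoints) as a subset of `ℝ`. -/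
def Iab (a b : EReal) : Set ℝ := {x : ℝ | a < (x : EReal) ∧ (x : EReal) < b}

/-- The oriented integral `∫_c^x h dμ`: over `[c,x)` if `c ≤ x`, and `-∫_{[x,c)} h dμ`
otherwise. -/
def oInt (μ : Measure ℝ) (h : ℝ → ℂ) (c x : ℝ) : ℂ :=
  if c ≤ x then ∫ t in Ico c x, h t ∂μ else - ∫ t in Ico x c, h t ∂μ

/-- The data of a left-definite measure Sturm--Liouville problem on an interval `(a,b)`:
Borel measures `ς` (positive, supported on the whole interval), `χ` (positive, non-zero) and
a real-valued Borel measure `ϱ = ϱ⁺ - ϱ⁻` (given by its Jordan decomposition `rhop`, `rhom`),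
all locally finite on `(a,b)`, such that `ς` has no point masses in common with `χ` or `ϱ`. -/
structure SLData where
  a : EReal
  b : EReal
  hab : a < b
  sgm : Measure ℝ
  chi : Measure ℝ
  rhop : Measure ℝ
  rhom : Measure ℝ
  h_sgm_supp : sgm ((Iab a b)ᶜ) = 0
  h_chi_supp : chi ((Iab a b)ᶜ) = 0
  h_rhop_supp : rhop ((Iab a b)ᶜ) = 0
  h_rhom_supp : rhom ((Iab a b)ᶜ) = 0
  h_sgm_fin : ∀ x ∈ Iab a b, ∀ y ∈ Iab a b, sgm (Icc x y) < ⊤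
  h_chi_fin : ∀ x ∈ Iab a b, ∀ y ∈ Iab a b, chi (Icc x y) < ⊤
  h_rhop_fin : ∀ x ∈ Iab a b, ∀ y ∈ Iab a b, rhop (Icc x y) < ⊤
  h_rhom_fin : ∀ x ∈ Iab a b, ∀ y ∈ Iab a b, rhom (Icc x y) < ⊤
  h_rho_sing : rhop.MutuallySingular rhom
  h_sgm_full : ∀ x ∈ Iab a b, ∀ ε : ℝ, 0 < ε → 0 < sgm (Ioo (x - ε) (x + ε))
  h_chi_ne : chi (Iab a b) ≠ 0
  h_nopm_chi : ∀ x ∈ Iab a b, sgm {x} * chi {x} = 0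
  h_nopm_rho : ∀ x ∈ Iab a b, sgm {x} * (rhop {x} + rhom {x}) = 0

namespace SLData
/-- The underlying interval. -/
def I (D : SLData) : Set ℝ := Iab D.a D.b
end SLData

/-- Oriented integral with respect to the signed measure `ϱ = ϱ⁺ - ϱ⁻`. -/
def rhoOInt (D : SLData) (h : ℝ → ℂ) (c x : ℝ) : ℂ :=
  oInt D.rhop h c x - oInt D.rhom h c x

/-- `f` is (left-continuous and) locally absolutely continuous with respect to `μ` on `s`,
with Radon--Nikodym derivative `f'`. -/
structure IsAClocOn (s : Set ℝ) (μ : Measure ℝ) (f f' : ℝ → ℂ) : Prop where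
  intOn : ∀ x ∈ s, ∀ y ∈ s, IntegrableOn f' (Ico x y) μ
  eq : ∀ c ∈ s, ∀ x ∈ s, f x = f c + oInt μ f' c x

/-- `f` is locally absolutely continuous with respect to the signed measure `ϱ`,
with Radon--Nikodym derivative `f'`. -/
structure IsSACloc (D : SLData) (f f' : ℝ → ℂ) : Prop where
  intOnp : ∀ x ∈ D.I, ∀ y ∈ D.I, IntegrableOn f' (Ico x y) D.rhop
  intOnm : ∀ x ∈ D.I, ∀ y ∈ D.I, IntegrableOn f' (Ico x y) D.rhom
  eq : ∀ c ∈ D.I, ∀ x ∈ D.I, f x = f c + rhoOInt D f' c x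

/-- The pair `(f, fτ)`, together with the quasi-derivatives `f1 = df/dς` and
`fτ1 = dfτ/dς`, belongs to the relation `T_loc`: both components are locally absolutely
continuous w.r.t. `ς` and `-f1 + ∫ f dχ` is locally absolutely continuous w.r.t. `ϱ` with
Radon--Nikodym derivative `fτ` (i.e. `τ f = fτ`). -/
structure IsTloc (D : SLData) (f ftau f1 ftau1 : ℝ → ℂ) : Prop where
  hf : IsAClocOn D.I D.sgm f f1
  hftau : IsAClocOn D.I D.sgm ftau ftau1
  rep : ∃ c ∈ D.I, IsSACloc D (fun x => - f1 x + oInt D.chi f c x) ftau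

/-- Membership in the modified Sobolev space on `s`: `f ∈ L²(χ)` and `f1 = df/dς ∈ L²(ς)`. -/
def MemH1On (D : SLData) (s : Set ℝ) (f f1 : ℝ → ℂ) : Prop :=
  IsAClocOn s D.sgm f f1 ∧ MemLp f 2 (D.chi.restrict s) ∧ MemLp f1 2 (D.sgm.restrict s)

/-- Membership in the modified Sobolev space `H¹(a,b)`. -/
def MemH1 (D : SLData) (f f1 : ℝ → ℂ) : Prop := MemH1On D D.I f f1

/-- The modified Sobolev inner product on `s`:
`⟨f,g⟩ = ∫ f g* dχ + ∫ f1 g1* dς`. -/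
def ipOn (D : SLData) (s : Set ℝ) (f f1 g g1 : ℝ → ℂ) : ℂ :=
  (∫ x in s, f x * cg (g x) ∂D.chi) + ∫ x in s, f1 x * cg (g1 x) ∂D.sgm

/-- The inner product of `H¹(a,b)`. -/
def ipH1 (D : SLData) (f f1 g g1 : ℝ → ℂ) : ℂ := ipOn D D.I f f1 g g1

/-- Squared `H¹` norm on `s`. -/
def H1normSqOn (D : SLData) (s : Set ℝ) (f f1 : ℝ → ℂ) : ℝ :=
  (∫ x in s, ‖f x‖ ^ 2 ∂D.chi) + ∫ x in s, ‖f1 x‖ ^ 2 ∂D.sgm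

/-- Squared `H¹(a,b)` norm. -/
def H1normSq (D : SLData) (f f1 : ℝ → ℂ) : ℝ := H1normSqOn D D.I f f1

/-- Convergence in the `H¹`-norm on `s`. -/
def H1TendstoOn (D : SLData) (s : Set ℝ) (F F1 : ℕ → ℝ → ℂ) (f f1 : ℝ → ℂ) : Prop :=
  Tendsto (fun n => H1normSqOn D s (fun x => F n x - f x) (fun x => F1 n x - f1 x))
    atTop (𝓝 0)

/-- Convergence in the `H¹(a,b)`-norm. -/
def H1Tendsto (D : SLData) (F F1 : ℕ → ℝ → ℂ) (f f1 : ℝ → ℂ) : Prop :=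
  H1TendstoOn D D.I F F1 f f1

/-- `g` has compact support contained in `(a,b)`. -/
def HasCompactSupportIn (D : SLData) (g : ℝ → ℂ) : Prop :=
  ∃ α ∈ D.I, ∃ β ∈ D.I, ∀ x : ℝ, x ∉ Icc α β → g x = 0

/-- Membership in `H¹_c(a,b)`, the compactly supported functions in `H¹(a,b)`. -/
def MemH1c (D : SLData) (g g1 : ℝ → ℂ) : Prop :=
  MemH1 D g g1 ∧ HasCompactSupportIn D g

/-- Membership in `H¹₀(a,b)`, the closure of `H¹_c(a,b)` in `H¹(a,b)`. -/
def MemH10 (D : SLData) (f f1 : ℝ → ℂ) : Prop :=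
  MemH1 D f f1 ∧ ∃ G G1 : ℕ → ℝ → ℂ, (∀ n, MemH1c D (G n) (G1 n)) ∧ H1Tendsto D G G1 f f1

/-- Membership (with quasi-derivative data) in the maximal relation `T_max`. -/
def MemTmax (D : SLData) (f ftau f1 ftau1 : ℝ → ℂ) : Prop :=
  IsTloc D f ftau f1 ftau1 ∧ MemH1 D f f1 ∧ MemH1 D ftau ftau1

/-- The modified Wronskian `V(f,g)(x) = fτ(x) g¹(x) - f¹(x) gτ(x)`. -/
def Vw (ftau f1 gtau g1 : ℝ → ℂ) (x : ℝ) : ℂ := ftau x * g1 x - f1 x * gtau x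

/-- The modified Wronskian `V(f,g*)(x) = fτ(x) g¹(x)* - f¹(x) gτ(x)*`. -/
def VwStar (ftau f1 gtau g1 : ℝ → ℂ) (x : ℝ) : ℂ :=
  ftau x * cg (g1 x) - f1 x * cg (gtau x)

/-- The filter of neighbourhoods of the left endpoint `a` within `(a,b)`. -/
def endA (D : SLData) : Filter ℝ :=
  comap (fun x : ℝ => (x : EReal)) (𝓝[Set.Ioo D.a D.b] D.a)

/-- The filter of neighbourhoods of the right endpoint `b` within `(a,b)`. -/
def endB (D : SLData) : Filter ℝ :=
  comap (fun x : ℝ => (x : EReal)) (𝓝[Set.Ioo D.a D.b] D.b)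

/-- The part of `(a,b)` near `a`, to the left of `c`. -/
def NearA (D : SLData) (c : ℝ) : Set ℝ := {x ∈ D.I | x < c}

/-- The part of `(a,b)` near `b`, to the right of `c`. -/
def NearB (D : SLData) (c : ℝ) : Set ℝ := {x ∈ D.I | c < x}

/-- `f` lies in `H¹(a,b)` near the endpoint `a`. -/
def MemH1NearA (D : SLData) (f f1 : ℝ → ℂ) : Prop :=
  IsAClocOn D.I D.sgm f f1 ∧ ∃ c ∈ D.I,
    MemLp f 2 (D.chi.restrict (NearA D c)) ∧ MemLp f1 2 (D.sgm.restrict (NearA D c))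

/-- `f` lies in `H¹(a,b)` near the endpoint `b`. -/
def MemH1NearB (D : SLData) (f f1 : ℝ → ℂ) : Prop :=
  IsAClocOn D.I D.sgm f f1 ∧ ∃ c ∈ D.I,
    MemLp f 2 (D.chi.restrict (NearB D c)) ∧ MemLp f1 2 (D.sgm.restrict (NearB D c))

/-- `(f,fτ)` lies in `T_max` near the endpoint `a`. -/
def MemTmaxNearA (D : SLData) (f ftau f1 ftau1 : ℝ → ℂ) : Prop :=
  IsTloc D f ftau f1 ftau1 ∧ MemH1NearA D f f1 ∧ MemH1NearA D ftau ftau1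

/-- `(f,fτ)` lies in `T_max` near the endpoint `b`. -/
def MemTmaxNearB (D : SLData) (f ftau f1 ftau1 : ℝ → ℂ) : Prop :=
  IsTloc D f ftau f1 ftau1 ∧ MemH1NearB D f f1 ∧ MemH1NearB D ftau ftau1

/-- `u` (with quasi-derivative `u1`) is a solution of `(τ - z) u = 0`, identified with the
pair `(u, z u) ∈ T_loc`. -/
def IsSolution (D : SLData) (z : ℂ) (u u1 : ℝ → ℂ) : Prop :=
  IsTloc D u (fun x => z * u x) u1 (fun x => z * u1 x)

/-- `τ` is in the limit-circle case at `a`: for every `z ≠ 0` all solutions of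
`(τ-z)u = 0` lie in `H¹(a,b)` near `a`. -/
def IsLC_A (D : SLData) : Prop :=
  ∀ z : ℂ, z ≠ 0 → ∀ u u1 : ℝ → ℂ, IsSolution D z u u1 → MemH1NearA D u u1

/-- `τ` is in the limit-circle case at `b`. -/
def IsLC_B (D : SLData) : Prop :=
  ∀ z : ℂ, z ≠ 0 → ∀ u u1 : ℝ → ℂ, IsSolution D z u u1 → MemH1NearB D u u1

/-- The measure `μ` is finite near the endpoint `a`. -/
def FinNearA (D : SLData) (μ : Measure ℝ) : Prop := ∃ c ∈ D.I, μ (NearA D c) < ⊤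

/-- The measure `μ` is finite near the endpoint `b`. -/
def FinNearB (D : SLData) (μ : Measure ℝ) : Prop := ∃ c ∈ D.I, μ (NearB D c) < ⊤

/-- Membership in `ker T_max`: solutions of `τ u = 0` lying in `H¹(a,b)`. -/
def MemKerTmax (D : SLData) (h h1 : ℝ → ℂ) : Prop :=
  IsSolution D 0 h h1 ∧ MemH1 D h h1

/-- Membership in the adjoint of the linear relation `T` in `H¹(a,b)`. -/
def MemAdjOf (D : SLData)
    (T : (ℝ → ℂ) → (ℝ → ℂ) → (ℝ → ℂ) → (ℝ → ℂ) → Prop)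
    (g gtau g1 gtau1 : ℝ → ℂ) : Prop :=
  MemH1 D g g1 ∧ MemH1 D gtau gtau1 ∧
    ∀ f ftau f1 ftau1, T f ftau f1 ftau1 →
      ipH1 D ftau ftau1 g g1 = ipH1 D f f1 gtau gtau1

/-- Membership in the minimal relation `T_min = T_max*`. -/
def MemTmin (D : SLData) (f ftau f1 ftau1 : ℝ → ℂ) : Prop :=
  MemAdjOf D (MemTmax D) f ftau f1 ftau1

/-- Data for separated boundary conditions: `v_a, v_b ∈ T_max` satisfying
`V(v_a,v_a*)(a) = 0`, `V(f,v_a*)(a) ≠ 0` for some `f ∈ T_max` whenever `τ` is in the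
limit-circle case at `a` (and similarly at `b`). -/
structure SepBC (D : SLData) where
  va : ℝ → ℂ
  vatau : ℝ → ℂ
  va1 : ℝ → ℂ
  vatau1 : ℝ → ℂ
  vb : ℝ → ℂ
  vbtau : ℝ → ℂ
  vb1 : ℝ → ℂ
  vbtau1 : ℝ → ℂ
  hva : MemTmax D va vatau va1 vatau1
  hvb : MemTmax D vb vbtau vb1 vbtau1
  bca : IsLC_A D →
    Tendsto (VwStar vatau va1 vatau va1) (endA D) (𝓝 0) ∧
      ∃ f ftau f1 ftau1, MemTmax D f ftau f1 ftau1 ∧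
        ∃ L : ℂ, L ≠ 0 ∧ Tendsto (VwStar ftau f1 vatau va1) (endA D) (𝓝 L)
  bcb : IsLC_B D →
    Tendsto (VwStar vbtau vb1 vbtau vb1) (endB D) (𝓝 0) ∧
      ∃ f ftau f1 ftau1, MemTmax D f ftau f1 ftau1 ∧
        ∃ L : ℂ, L ≠ 0 ∧ Tendsto (VwStar ftau f1 vbtau vb1) (endB D) (𝓝 L)

/-- Membership in the restriction `S` of `T_max` given by the separated boundary
conditions `V(f,v_a*)(a) = V(f,v_b*)(b) = 0`. -/
def MemS (D : SLData) (B : SepBC D) (f ftau f1 ftau1 : ℝ → ℂ) : Prop :=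
  MemTmax D f ftau f1 ftau1 ∧
    Tendsto (VwStar ftau f1 B.vatau B.va1) (endA D) (𝓝 0) ∧
    Tendsto (VwStar ftau f1 B.vbtau B.vb1) (endB D) (𝓝 0)

/-- The relation `S` is self-adjoint: `S* = S`. -/
def SelfAdjointS (D : SLData) (B : SepBC D) : Prop :=
  ∀ g gtau : ℝ → ℂ,
    (∃ g1 gtau1, MemAdjOf D (MemS D B) g gtau g1 gtau1) ↔
      ∃ g1 gtau1, MemS D B g gtau g1 gtau1

/-- `z` belongs to the resolvent set `ρ(S)`: `S - z` is surjective onto `H¹(a,b)` with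
trivial kernel and bounded inverse. -/
def MemResolventSet (D : SLData) (B : SepBC D) (z : ℂ) : Prop :=
  (∀ g g1, MemH1 D g g1 →
    ∃ f f1, MemS D B f (fun x => z * f x + g x) f1 (fun x => z * f1 x + g1 x)) ∧
  (∀ f f1, MemS D B f (fun x => z * f x) f1 (fun x => z * f1 x) → ∀ x ∈ D.I, f x = 0) ∧
  ∃ C : ℝ, ∀ g g1 f f1, MemH1 D g g1 →
    MemS D B f (fun x => z * f x + g x) f1 (fun x => z * f1 x + g1 x) →
    H1normSq D f f1 ≤ C * H1normSq D g g1

/-- Zero is not an eigenvalue of `S`. -/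
def ZeroNotEV (D : SLData) (B : SepBC D) : Prop :=
  ∀ f f1 : ℝ → ℂ, MemS D B f (fun _ => 0) f1 (fun _ => 0) → ∀ x ∈ D.I, f x = 0

/-- The distinguished real solutions `w_a`, `w_b` of `τ u = 0` lying in `H¹(a,b)` near `a`
resp. `b` with `lim g w_a¹ = 0` at `a` resp. `lim g w_b¹ = 0` at `b` for all `g ∈ H¹(a,b)`,
together with their (constant, non-zero) Wronskian `W = W(w_b, w_a)`. -/
structure WaWb (D : SLData) where
  wa : ℝ → ℂ
  wa1 : ℝ → ℂ
  wb : ℝ → ℂ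
  wb1 : ℝ → ℂ
  W : ℂ
  hwa_sol : IsSolution D 0 wa wa1
  hwb_sol : IsSolution D 0 wb wb1
  hwa_real : ∀ x ∈ D.I, (wa x).im = 0 ∧ (wa1 x).im = 0
  hwb_real : ∀ x ∈ D.I, (wb x).im = 0 ∧ (wb1 x).im = 0
  hwa_nt : ∃ x ∈ D.I, wa x ≠ 0
  hwb_nt : ∃ x ∈ D.I, wb x ≠ 0
  hwa_near : MemH1NearA D wa wa1
  hwb_near : MemH1NearB D wb wb1
  hwa_lim : ∀ g g1 : ℝ → ℂ, MemH1 D g g1 → Tendsto (fun x => g x * wa1 x) (endA D) (𝓝 0)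
  hwb_lim : ∀ g g1 : ℝ → ℂ, MemH1 D g g1 → Tendsto (fun x => g x * wb1 x) (endB D) (𝓝 0)
  hW : ∀ x ∈ D.I, wb x * wa1 x - wb1 x * wa x = W
  hW_ne : W ≠ 0

/-- The reproducing element `δ_c` of `H¹(a,b)`. -/
def deltaFun {D : SLData} (Wd : WaWb D) (c x : ℝ) : ℂ :=
  Wd.W⁻¹ * (if x ≤ c then Wd.wa x * Wd.wb c else Wd.wa c * Wd.wb x)

/-- The quasi-derivative of the reproducing element `δ_c`. -/
def deltaFun1 {D : SLData} (Wd : WaWb D) (c x : ℝ) : ℂ :=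
  Wd.W⁻¹ * (if x ≤ c then Wd.wa1 x * Wd.wb c else Wd.wa c * Wd.wb1 x)

/-- The resolvent kernel `G_z(x,y)`:
`G_z(x,y) + δ_x(y)/z = V(u_b,u_a)⁻¹ u_a(min(x,y)) u_b(max(x,y))`. -/
def Gker {D : SLData} (Wd : WaWb D) (ua ub : ℝ → ℂ) (Vba z : ℂ) (x y : ℝ) : ℂ :=
  Vba⁻¹ * (if y ≤ x then ua y * ub x else ua x * ub y) - z⁻¹ * deltaFun Wd x y

/-- The quasi-derivative in `y` of the resolvent kernel `G_z(x,y)`. -/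
def Gker1 {D : SLData} (Wd : WaWb D) (ua ua1 ub ub1 : ℝ → ℂ) (Vba z : ℂ) (x y : ℝ) : ℂ :=
  Vba⁻¹ * (if y ≤ x then ua1 y * ub x else ua x * ub1 y) - z⁻¹ * deltaFun1 Wd x y

/-- `f` is analytic at every point of `s`. -/
def AnalOn (f : ℂ → ℂ) (s : Set ℂ) : Prop := ∀ z ∈ s, AnalyticAt ℂ f z

/-- The family `z ↦ u_z(c)` is real analytic on `ℂ \ {0}` with at most a pole at zero,
for every `c ∈ (a,b)`. -/
def RealAnalyticPunctured (D : SLData) (u : ℂ → ℝ → ℂ) : Prop :=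
  ∀ c ∈ D.I,
    AnalOn (fun z => u z c) {z : ℂ | z ≠ 0} ∧
    (∀ x : ℝ, x ≠ 0 → (u (x : ℂ) c).im = 0) ∧
    ∃ n : ℕ, ∃ g : ℂ → ℂ, AnalyticAt ℂ g 0 ∧ ∀ z : ℂ, z ≠ 0 → g z = z ^ n * u z c

/-- The solution `u` of `(τ-z)u = 0` lies in `S` near `a`: it lies in `H¹(a,b)` near `a`
and satisfies the boundary condition at `a` whenever `τ` is in the limit-circle case
at `a`. -/
def LiesInSNearA (D : SLData) (B : SepBC D) (z : ℂ) (u u1 : ℝ → ℂ) : Prop :=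
  MemH1NearA D u u1 ∧
    (IsLC_A D → Tendsto (VwStar (fun x => z * u x) u1 B.vatau B.va1) (endA D) (𝓝 0))

/-- The solution `u` of `(τ-z)u = 0` lies in `S` near `b`. -/
def LiesInSNearB (D : SLData) (B : SepBC D) (z : ℂ) (u u1 : ℝ → ℂ) : Prop :=
  MemH1NearB D u u1 ∧
    (IsLC_B D → Tendsto (VwStar (fun x => z * u x) u1 B.vbtau B.vb1) (endB D) (𝓝 0))

/-- A real entire family `φ_z` of non-trivial solutions of `(τ-z)u = 0` lying in `S`
near `a`. -/
structure PhiEntire (D : SLData) (B : SepBC D) where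
  φ : ℂ → ℝ → ℂ
  φ1 : ℂ → ℝ → ℂ
  sol : ∀ z : ℂ, IsSolution D z (φ z) (φ1 z)
  nontriv : ∀ z : ℂ, ∃ x ∈ D.I, φ z x ≠ 0
  inS : ∀ z : ℂ, LiesInSNearA D B z (φ z) (φ1 z)
  entire : ∀ c ∈ D.I, Differentiable ℂ (fun z => φ z c) ∧ Differentiable ℂ (fun z => φ1 z c)
  real : ∀ c ∈ D.I, ∀ x : ℝ, (φ (x : ℂ) c).im = 0 ∧ (φ1 (x : ℂ) c).im = 0

/-- `μ` is the spectral measure of `S` associated with the solutions `φ_z`: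
a positive Borel measure on `ℝ \ {0}` such that
`⟨R_z δ_α, δ_β⟩ = ∫ (λ - z)⁻¹ φ_λ(α) φ_λ(β) dμ(λ)` for `z ∈ ρ(S)`. -/
def IsSpectralMeasure (D : SLData) (B : SepBC D) (Wd : WaWb D)
    (φ : ℂ → ℝ → ℂ) (μ : Measure ℝ) : Prop :=
  μ {0} = 0 ∧
  (∀ x : ℝ, x ≠ 0 → ∃ ε : ℝ, 0 < ε ∧ μ (Ioo (x - ε) (x + ε)) < ⊤) ∧
  ∀ α ∈ D.I, ∀ β ∈ D.I, ∀ z : ℂ, MemResolventSet D B z →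
    ∀ f f1 : ℝ → ℂ,
      MemS D B f (fun x => z * f x + deltaFun Wd α x) f1
        (fun x => z * f1 x + deltaFun1 Wd α x) →
      ipH1 D f f1 (deltaFun Wd β) (deltaFun1 Wd β)
        = ∫ lam : ℝ, ((lam : ℂ) - z)⁻¹ * (φ (lam : ℂ) α * φ (lam : ℂ) β) ∂μ

/-- Membership in the domain of `S`. -/
def MemDomS (D : SLData) (B : SepBC D) (f f1 : ℝ → ℂ) : Prop :=
  ∃ ftau ftau1, MemS D B f ftau f1 ftau1

/-- Membership in the closure of the domain of `S` in `H¹(a,b)`. -/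
def MemDomClosure (D : SLData) (B : SepBC D) (f f1 : ℝ → ℂ) : Prop :=
  MemH1 D f f1 ∧
    ∃ G G1 : ℕ → ℝ → ℂ, (∀ n, MemDomS D B (G n) (G1 n)) ∧ H1Tendsto D G G1 f f1

/-- Membership in the multi-valued part `mul(S) = {h : (0,h) ∈ S}`. -/
def MemMulS (D : SLData) (B : SepBC D) (m : ℝ → ℂ) : Prop :=
  ∃ m1, MemS D B (fun _ => 0) m (fun _ => 0) m1

/-- `F` is the spectral (generalized Fourier) transform `𝓕 : H¹(a,b) → L²(ℝ\{0}; μ)`: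
the unique bounded linear operator with `𝓕 δ_c = φ_·(c)` `μ`-a.e. for all `c ∈ (a,b)`. -/
def IsSpectralTransform (D : SLData) (Wd : WaWb D) (φ : ℂ → ℝ → ℂ) (μ : Measure ℝ)
    (F : (ℝ → ℂ) → (ℝ → ℂ) → ℝ → ℂ) : Prop :=
  (∀ f f1, MemH1 D f f1 → MemLp (F f f1) 2 μ) ∧
  (∃ C : ℝ, ∀ f f1, MemH1 D f f1 →
    (∫ lam : ℝ, ‖F f f1 lam‖ ^ 2 ∂μ) ≤ C * H1normSq D f f1) ∧
  (∀ f f1 g g1, MemH1 D f f1 → MemH1 D g g1 → ∀ c1 c2 : ℂ,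
    ∀ᵐ lam ∂μ, F (fun x => c1 * f x + c2 * g x) (fun x => c1 * f1 x + c2 * g1 x) lam
      = c1 * F f f1 lam + c2 * F g g1 lam) ∧
  ∀ c ∈ D.I, ∀ᵐ lam ∂μ, F (deltaFun Wd c) (deltaFun1 Wd c) lam = φ (lam : ℂ) c

/-- The open upper complex half-plane. -/
def UHP : Set ℂ := {z : ℂ | 0 < z.im}

/-- `N` is of bounded type in the upper half-plane: a quotient of two bounded analytic
functions. -/
def BoundedType (N : ℂ → ℂ) : Prop :=
  ∃ P Q : ℂ → ℂ, AnalOn P UHP ∧ AnalOn Q UHP ∧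
    (∃ C : ℝ, ∀ z ∈ UHP, ‖P z‖ ≤ C) ∧ (∃ C : ℝ, ∀ z ∈ UHP, ‖Q z‖ ≤ C) ∧
    (∃ z₀ ∈ UHP, Q z₀ ≠ 0) ∧ ∀ z ∈ UHP, N z * Q z = P z

/-- `N` has non-positive mean type: `limsup_{y→∞} log|N(iy)|/y ≤ 0`. -/
def MeanTypeNonpos (N : ℂ → ℂ) : Prop :=
  ∀ ε : ℝ, 0 < ε → ∀ᶠ y : ℝ in atTop, Real.log ‖N (Complex.I * (y : ℂ))‖ ≤ ε * y

/-- `E` is a de Branges function: entire with `|E(z)| > |E(z*)|` in the open upper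
half-plane. -/
def IsdBFun (E : ℂ → ℂ) : Prop :=
  Differentiable ℂ E ∧ ∀ z ∈ UHP, ‖E (cg z)‖ < ‖E z‖

/-- `F^#(z) = F(z*)*`. -/
def ESharp (F : ℂ → ℂ) : ℂ → ℂ := fun z => cg (F (cg z))

/-- Membership in the de Branges space `B(E)` associated with the de Branges function
`E`. -/
structure MemdB (E F : ℂ → ℂ) : Prop where
  entire : Differentiable ℂ F
  l2 : Integrable (fun lam : ℝ => ‖F (lam : ℂ)‖ ^ 2 / ‖E (lam : ℂ)‖ ^ 2)
  bt1 : BoundedType fun z => F z / E z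
  bt2 : BoundedType fun z => ESharp F z / E z
  mt1 : MeanTypeNonpos fun z => F z / E z
  mt2 : MeanTypeNonpos fun z => ESharp F z / E z

/-- The inner product of the de Branges space `B(E)`. -/
def dBip (E F G : ℂ → ℂ) : ℂ :=
  ((Real.pi : ℂ))⁻¹ *
    ∫ lam : ℝ, F (lam : ℂ) * cg (G (lam : ℂ)) / ((‖E (lam : ℂ)‖ ^ 2 : ℝ) : ℂ)

/-- The de Branges function `E(z,c) = z φ_z(c) + i φ_z¹(c)`. -/
def Efun (φ φ1 : ℂ → ℝ → ℂ) (c : ℝ) : ℂ → ℂ :=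
  fun z => z * φ z c + Complex.I * φ1 z c

/-- The interval `(a,c)`. -/
def Iac (D : SLData) (c : ℝ) : Set ℝ := Iab D.a (c : EReal)

/-- The transform `f ↦ f̂`, `f̂(z) = ∫_a^c φ_z f dχ + ∫_a^c φ_z¹ f¹ dς`. -/
def hatT (D : SLData) (φ φ1 : ℂ → ℝ → ℂ) (c : ℝ) (f f1 : ℝ → ℂ) (z : ℂ) : ℂ :=
  (∫ x in Iac D c, φ z x * f x ∂D.chi) + ∫ x in Iac D c, φ1 z x * f1 x ∂D.sgm

/-- Membership in `D(c)`, the closed linear span in `H¹(a,c)` of the restrictions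
`φ_z|_(a,c)`, `z ∈ ℂ`. -/
def MemDc (D : SLData) (φ φ1 : ℂ → ℝ → ℂ) (c : ℝ) (f f1 : ℝ → ℂ) : Prop :=
  MemH1On D (Iac D c) f f1 ∧
  ∃ (N : ℕ → ℕ) (coef : ℕ → ℕ → ℂ) (pts : ℕ → ℕ → ℂ),
    Tendsto (fun n => H1normSqOn D (Iac D c)
      (fun x => (∑ i ∈ Finset.range (N n), coef n i * φ (pts n i) x) - f x)
      (fun x => (∑ i ∈ Finset.range (N n), coef n i * φ1 (pts n i) x) - f1 x))
      atTop (𝓝 0)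

/-- The support of the measure `ϱ` in `(a,b)`. -/
def suppRho (D : SLData) : Set ℝ :=
  {x ∈ D.I | ∀ ε : ℝ, 0 < ε → 0 < (D.rhop + D.rhom) (Ioo (x - ε) (x + ε))}

/-- `τ` is regular at `a`: all measures are finite near `a`. -/
def RegularAtA (D : SLData) : Prop :=
  ∃ c ∈ D.I, D.sgm (NearA D c) < ⊤ ∧ D.chi (NearA D c) < ⊤ ∧
    D.rhop (NearA D c) < ⊤ ∧ D.rhom (NearA D c) < ⊤

/-- `τ` is regular at `b`. -/
def RegularAtB (D : SLData) : Prop :=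
  ∃ c ∈ D.I, D.sgm (NearB D c) < ⊤ ∧ D.chi (NearB D c) < ⊤ ∧
    D.rhop (NearB D c) < ⊤ ∧ D.rhom (NearB D c) < ⊤

/-- `|ϱ|` has no mass near `a`. -/
def NoRhoMassNearA (D : SLData) : Prop :=
  ∃ c ∈ D.I, D.rhop (NearA D c) = 0 ∧ D.rhom (NearA D c) = 0

/-- `|ϱ|` has no mass near `b`. -/
def NoRhoMassNearB (D : SLData) : Prop :=
  ∃ c ∈ D.I, D.rhop (NearB D c) = 0 ∧ D.rhom (NearB D c) = 0

/-- The boundary condition at `a` is a Neumann boundary condition. -/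
def NeumannAtA (D : SLData) (B : SepBC D) : Prop :=
  ∀ f ftau f1 ftau1, MemTmax D f ftau f1 ftau1 →
    (Tendsto (VwStar ftau f1 B.vatau B.va1) (endA D) (𝓝 0) ↔
      Tendsto f1 (endA D) (𝓝 0))

/-- The boundary condition at `b` is a Neumann boundary condition. -/
def NeumannAtB (D : SLData) (B : SepBC D) : Prop :=
  ∀ f ftau f1 ftau1, MemTmax D f ftau f1 ftau1 →
    (Tendsto (VwStar ftau f1 B.vbtau B.vb1) (endB D) (𝓝 0) ↔
      Tendsto f1 (endB D) (𝓝 0))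

/-- The endpoint `a` is added to `Σ`. -/
def AddA (D : SLData) (B : SepBC D) : Prop :=
  RegularAtA D ∧ ¬ NeumannAtA D B ∧ NoRhoMassNearA D

/-- The endpoint `b` is added to `Σ`. -/
def AddB (D : SLData) (B : SepBC D) : Prop :=
  RegularAtB D ∧ ¬ NeumannAtB D B ∧ NoRhoMassNearB D

/-- `x = inf supp(ϱ)` is removed from `Σ` (when `a` has not been added). -/
def RemovedLeftPt (D : SLData) (x : ℝ) : Prop :=
  (∀ y ∈ suppRho D, x ≤ y) ∧ ¬ ∃ c ∈ D.I, x < c ∧ (D.rhop + D.rhom) (Ioo x c) = 0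

/-- `x = sup supp(ϱ)` is removed from `Σ` (when `b` has not been added). -/
def RemovedRightPt (D : SLData) (x : ℝ) : Prop :=
  (∀ y ∈ suppRho D, y ≤ x) ∧ ¬ ∃ c ∈ D.I, c < x ∧ (D.rhop + D.rhom) (Ioo c x) = 0

/-- Membership in the set `Σ ⊆ supp(ϱ) ∪ {a,b}`. -/
def MemSigma (D : SLData) (B : SepBC D) (y : EReal) : Prop :=
  (y = D.a ∧ AddA D B) ∨ (y = D.b ∧ AddB D B) ∨
    ∃ x ∈ suppRho D, y = (x : EReal) ∧
      (AddA D B ∨ ¬ RemovedLeftPt D x) ∧ (AddB D B ∨ ¬ RemovedRightPt D x)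

/-- The real points of `Σ`. -/
def SigmaR (D : SLData) (B : SepBC D) : Set ℝ := {x : ℝ | MemSigma D B (x : EReal)}

/-- The projection onto `B°(c) = {F ∈ B(c) : F(0) = 0}` along the span of
`z ↦ φ_z(c)` (the reproducing kernel at `0`). -/
def Pcirc (φ : ℂ → ℝ → ℂ) (c : ℝ) (F : ℂ → ℂ) : ℂ → ℂ :=
  fun z => F z - (F 0 / φ 0 c) * φ z c

/-- The deficiency subspace `ran(T_min - i)^⊥` of `T_min`. -/
def MemDefSpace (D : SLData) (g g1 : ℝ → ℂ) : Prop :=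
  MemH1 D g g1 ∧ ∀ f ftau f1 ftau1, MemTmin D f ftau f1 ftau1 →
    ipH1 D (fun x => ftau x - Complex.I * f x) (fun x => ftau1 x - Complex.I * f1 x)
      g g1 = 0


section LagrangeAux

lemma prim_meas (μ : Measure ℝ) (u : ℝ → ℂ) (hu : Integrable u μ) (α : ℝ) :
    Measurable (fun x => ∫ t in Ico α x, u t ∂μ) := by
  obtain ⟨v, hv, huv⟩ := hu.1
  have hvm : Measurable v := hv.measurable
  have hvi : Integrable v μ := hu.congr huv
  have key : ∀ x, ∫ t in Ico α x, u t ∂μ = ∫ t in Ico α x, v t ∂μ := fun x =>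
    integral_congr_ae (ae_restrict_of_ae huv)
  simp_rw [key]
  have hmono : ∀ w : ℝ → ℝ, Measurable w → (∀ t, 0 ≤ w t) → (∀ t, w t ≤ ‖v t‖) →
      Measurable (fun x => ∫ t in Ico α x, w t ∂μ) := by
    intro w hwm hw0 hwb
    have hwi : Integrable w μ := by
      refine Integrable.mono' hvi.norm hwm.aestronglyMeasurable ?_
      exact Eventually.of_forall fun t => by
        rw [Real.norm_eq_abs, abs_of_nonneg (hw0 t)]; exact hwb t
    have : Monotone (fun x => ∫ t in Ico α x, w t ∂μ) := by
      intro x y hxy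
      refine setIntegral_mono_set hwi.integrableOn
        (Eventually.of_forall fun t => hw0 t) ?_
      exact HasSubset.Subset.eventuallyLE (Ico_subset_Ico_right hxy)
    exact this.measurable
  have hsplit : ∀ w : ℝ → ℝ, Measurable w → (∀ t, |w t| ≤ ‖v t‖) →
      Measurable (fun x => ∫ t in Ico α x, w t ∂μ) := by
    intro w hwm hwb
    have hi : Integrable w μ := by
      refine Integrable.mono' hvi.norm hwm.aestronglyMeasurable ?_
      exact Eventually.of_forall fun t => by rw [Real.norm_eq_abs]; exact hwb t
    have h1 := hmono (fun t => max (w t) 0) (hwm.max measurable_const)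
      (fun t => le_max_right _ _)
      (fun t => max_le ((le_abs_self _).trans (hwb t)) (norm_nonneg _))
    have h2 := hmono (fun t => max (-(w t)) 0) (hwm.neg.max measurable_const)
      (fun t => le_max_right _ _)
      (fun t => max_le ((neg_le_abs _).trans (hwb t)) (norm_nonneg _))
    have heq : (fun x => ∫ t in Ico α x, w t ∂μ) =
        fun x => (∫ t in Ico α x, max (w t) 0 ∂μ) - ∫ t in Ico α x, max (-(w t)) 0 ∂μ := by
      funext x
      rw [← integral_sub hi.integrableOn.pos_part hi.integrableOn.neg_part]
      exact integral_congr_ae (Eventually.of_forall fun t => by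
        simp [max_zero_sub_max_neg_zero_eq_self])
    rw [heq]
    exact h1.sub h2
  have hre := hsplit (fun t => (v t).re) (Complex.measurable_re.comp hvm)
    (fun t => Complex.abs_re_le_norm _)
  have him := hsplit (fun t => (v t).im) (Complex.measurable_im.comp hvm)
    (fun t => Complex.abs_im_le_norm _)
  have heq : (fun x => ∫ t in Ico α x, v t ∂μ) = fun x =>
      ((∫ t in Ico α x, (v t).re ∂μ : ℝ) : ℂ) + ((∫ t in Ico α x, (v t).im ∂μ : ℝ) : ℂ) * Complex.I := by
    funext x
    exact (setIntegral_re_add_im hvi.integrableOn).symm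
  rw [heq]
  exact ((Complex.measurable_ofReal.comp hre).add
    ((Complex.measurable_ofReal.comp him).mul_const _))

/-- Bounded measurable on a set. -/
def BMOn (J : Set ℝ) (F : ℝ → ℂ) : Prop :=
  ∃ φ : ℝ → ℂ, Measurable φ ∧ (∀ t ∈ J, F t = φ t) ∧ ∃ C : ℝ, ∀ t, ‖φ t‖ ≤ C

lemma BMOn.integrableOn {J : Set ℝ} {F : ℝ → ℂ} (h : BMOn J F) (hJ : MeasurableSet J)
    (ν : Measure ℝ) (hν : ν J ≠ ⊤) : IntegrableOn F J ν := by
  obtain ⟨φ, hφm, hφeq, C, hC⟩ := h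
  have hfin : IsFiniteMeasure (ν.restrict J) :=
    ⟨by rwa [Measure.restrict_apply_univ, lt_top_iff_ne_top]⟩
  have hφi : Integrable φ (ν.restrict J) :=
    Integrable.mono' (integrable_const C) hφm.aestronglyMeasurable
      (Eventually.of_forall hC)
  exact hφi.congr ((ae_restrict_iff' hJ).2 (Eventually.of_forall fun t ht => (hφeq t ht).symm))

lemma BMOn.mul_integrable {J : Set ℝ} {F v : ℝ → ℂ} (h : BMOn J F) (hJ : MeasurableSet J)
    {ν : Measure ℝ} (hv : IntegrableOn v J ν) :
    IntegrableOn (fun t => F t * v t) J ν := by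
  obtain ⟨φ, hφm, hφeq, C, hC⟩ := h
  have : Integrable (fun t => φ t * v t) (ν.restrict J) :=
    hv.bdd_mul hφm.aestronglyMeasurable (Eventually.of_forall hC)
  exact this.congr ((ae_restrict_iff' hJ).2 (Eventually.of_forall fun t ht => by
    simp [hφeq t ht]))

lemma BMOn.mul {J : Set ℝ} {F G : ℝ → ℂ} (hF : BMOn J F) (hG : BMOn J G) :
    BMOn J (fun t => F t * G t) := by
  obtain ⟨φ, hφm, hφeq, C, hC⟩ := hF
  obtain ⟨ψ, hψm, hψeq, C', hC'⟩ := hG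
  refine ⟨fun t => φ t * ψ t, hφm.mul hψm, fun t ht => by simp [hφeq t ht, hψeq t ht],
    |C| * |C'|, fun t => ?_⟩
  rw [norm_mul]
  exact mul_le_mul ((hC t).trans (le_abs_self _)) ((hC' t).trans (le_abs_self _))
    (norm_nonneg _) (abs_nonneg _)

lemma BMOn.conj {J : Set ℝ} {F : ℝ → ℂ} (hF : BMOn J F) :
    BMOn J (fun t => (starRingEnd ℂ) (F t)) := by
  obtain ⟨φ, hφm, hφeq, C, hC⟩ := hF
  exact ⟨fun t => (starRingEnd ℂ) (φ t), (Complex.continuous_conj.measurable).comp hφm,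
    fun t ht => by simp [hφeq t ht], C, fun t => by simpa using hC t⟩

lemma BMOn_prim {J : Set ℝ} (hJ : MeasurableSet J) (μ : Measure ℝ) (hμ : μ J ≠ ⊤)
    (u : ℝ → ℂ) (hu : IntegrableOn u J μ) (α : ℝ) (hsub : ∀ t ∈ J, Ico α t ⊆ J) :
    BMOn J (fun t => ∫ s in Ico α t, u s ∂μ) := by
  have hfin : IsFiniteMeasure (μ.restrict J) :=
    ⟨by rwa [Measure.restrict_apply_univ, lt_top_iff_ne_top]⟩
  refine ⟨fun t => ∫ s in Ico α t, u s ∂(μ.restrict J), prim_meas _ u hu α, fun t ht => ?_,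
    ∫ s, ‖u s‖ ∂(μ.restrict J), fun t => ?_⟩
  · simp only
    rw [Measure.restrict_restrict measurableSet_Ico,
      Set.inter_eq_self_of_subset_left (hsub t ht)]
  · exact (norm_integral_le_integral_norm _).trans
      (setIntegral_le_integral hu.norm (Eventually.of_forall fun t => norm_nonneg _))

lemma prodIBP0 {α β : ℝ} (μ ν : Measure ℝ)
    (hμ : μ (Ico α β) ≠ ⊤) (hν : ν (Ico α β) ≠ ⊤)
    (u v : ℝ → ℂ) (hu : IntegrableOn u (Ico α β) μ) (hv : IntegrableOn v (Ico α β) ν)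
    (hatom : ∀ t ∈ Ico α β, μ {t} = 0 ∨ ν {t} = 0) :
    (∫ s in Ico α β, u s ∂μ) * (∫ t in Ico α β, v t ∂ν)
      = (∫ t in Ico α β, (∫ s in Ico α t, u s ∂μ) * v t ∂ν)
        + ∫ s in Ico α β, u s * (∫ t in Ico α s, v t ∂ν) ∂μ := by
  set J := Ico α β with hJdef
  have hJm : MeasurableSet J := measurableSet_Ico
  set ρ := μ.restrict J with hρdef
  set σ := ν.restrict J with hσdef
  have hρfin : IsFiniteMeasure ρ := ⟨by rwa [Measure.restrict_apply_univ, lt_top_iff_ne_top]⟩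
  have hσfin : IsFiniteMeasure σ := ⟨by rwa [Measure.restrict_apply_univ, lt_top_iff_ne_top]⟩
  have hu' : Integrable u ρ := hu
  have hv' : Integrable v σ := hv
  set H : ℝ × ℝ → ℂ := fun p => u p.1 * v p.2 with hHdef
  have hH : Integrable H (ρ.prod σ) := hu'.mul_prod hv'
  have hS1 : MeasurableSet {p : ℝ × ℝ | p.1 < p.2} := measurableSet_lt measurable_fst measurable_snd
  have hS2 : MeasurableSet {p : ℝ × ℝ | p.2 < p.1} := measurableSet_lt measurable_snd measurable_fst
  have hS3 : MeasurableSet {p : ℝ × ℝ | p.1 = p.2} := measurableSet_eq_fun measurable_fst measurable_snd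
  have hdecomp : H = fun p => {p : ℝ × ℝ | p.1 < p.2}.indicator H p
      + {p : ℝ × ℝ | p.2 < p.1}.indicator H p + {p : ℝ × ℝ | p.1 = p.2}.indicator H p := by
    funext p
    rcases lt_trichotomy p.1 p.2 with h | h | h
    · simp [Set.indicator_apply, h, asymm h, ne_of_lt h]
    · simp [Set.indicator_apply, h, lt_irrefl]
    · simp [Set.indicator_apply, h, asymm h, (ne_of_lt h).symm, not_lt_of_gt h]
  have hsplit : ∫ p, H p ∂(ρ.prod σ)
      = ∫ p, {p : ℝ × ℝ | p.1 < p.2}.indicator H p ∂(ρ.prod σ)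
        + ∫ p, {p : ℝ × ℝ | p.2 < p.1}.indicator H p ∂(ρ.prod σ)
        + ∫ p, {p : ℝ × ℝ | p.1 = p.2}.indicator H p ∂(ρ.prod σ) := by
    have h12 : ∫ p : ℝ × ℝ, ({p : ℝ × ℝ | p.1 < p.2}.indicator H p
          + {p : ℝ × ℝ | p.2 < p.1}.indicator H p) ∂(ρ.prod σ)
        = ∫ p, {p : ℝ × ℝ | p.1 < p.2}.indicator H p ∂(ρ.prod σ)
          + ∫ p, {p : ℝ × ℝ | p.2 < p.1}.indicator H p ∂(ρ.prod σ) :=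
      integral_add (hH.indicator hS1) (hH.indicator hS2)
    have h123 : ∫ p : ℝ × ℝ, ({p : ℝ × ℝ | p.1 < p.2}.indicator H p
          + {p : ℝ × ℝ | p.2 < p.1}.indicator H p + {p : ℝ × ℝ | p.1 = p.2}.indicator H p) ∂(ρ.prod σ)
        = ∫ p : ℝ × ℝ, ({p : ℝ × ℝ | p.1 < p.2}.indicator H p
            + {p : ℝ × ℝ | p.2 < p.1}.indicator H p) ∂(ρ.prod σ)
          + ∫ p, {p : ℝ × ℝ | p.1 = p.2}.indicator H p ∂(ρ.prod σ) :=
      integral_add (by exact (hH.indicator hS1).add (hH.indicator hS2)) (hH.indicator hS3)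
    conv_lhs => rw [hdecomp]
    beta_reduce
    rw [h123, h12]
  have hprod : ∫ p, H p ∂(ρ.prod σ) = (∫ s, u s ∂ρ) * (∫ t, v t ∂σ) := integral_prod_mul u v
  -- term 1
  have hT1 : ∫ p, {p : ℝ × ℝ | p.1 < p.2}.indicator H p ∂(ρ.prod σ)
      = ∫ t, (∫ s in Iio t, u s ∂ρ) * v t ∂σ := by
    rw [integral_prod_symm _ (hH.indicator hS1)]
    refine integral_congr_ae (Eventually.of_forall fun t => ?_)
    have : ∀ s : ℝ, {p : ℝ × ℝ | p.1 < p.2}.indicator H (s, t)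
        = (Iio t).indicator (fun s' => u s' * v t) s := by
      intro s; by_cases h : s < t <;> simp [Set.indicator_apply, h, hHdef]
    simp_rw [this]
    rw [integral_indicator measurableSet_Iio]
    simp_rw [← smul_eq_mul]
    exact integral_smul_const _ _
  -- term 2
  have hT2 : ∫ p, {p : ℝ × ℝ | p.2 < p.1}.indicator H p ∂(ρ.prod σ)
      = ∫ s, u s * (∫ t in Iio s, v t ∂σ) ∂ρ := by
    rw [integral_prod _ (hH.indicator hS2)]
    refine integral_congr_ae (Eventually.of_forall fun s => ?_)
    have : ∀ t : ℝ, {p : ℝ × ℝ | p.2 < p.1}.indicator H (s, t)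
        = (Iio s).indicator (fun t' => u s * v t') t := by
      intro t; by_cases h : t < s <;> simp [Set.indicator_apply, h, hHdef]
    simp_rw [this]
    rw [integral_indicator measurableSet_Iio]
    simp_rw [← smul_eq_mul]
    exact integral_smul _ _
  -- diagonal term
  have hT3 : ∫ p, {p : ℝ × ℝ | p.1 = p.2}.indicator H p ∂(ρ.prod σ) = 0 := by
    rw [integral_prod_symm _ (hH.indicator hS3)]
    have hinner : ∀ t : ℝ, (∫ s, {p : ℝ × ℝ | p.1 = p.2}.indicator H (s, t) ∂ρ)
        = (ρ {t}).toReal • (u t * v t) := by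
      intro t
      have : ∀ s : ℝ, {p : ℝ × ℝ | p.1 = p.2}.indicator H (s, t)
          = ({t} : Set ℝ).indicator (fun s' => u s' * v t) s := by
        intro s; by_cases h : s = t <;> simp [Set.indicator_apply, h, hHdef]
      simp_rw [this]
      rw [integral_indicator (measurableSet_singleton t), integral_singleton]
      rfl
    simp_rw [hinner]
    have hA : Set.Countable {t : ℝ | 0 < ρ {t}} := by
      have := Measure.countable_meas_level_set_pos (μ := ρ) (g := fun x : ℝ => x) measurable_id
      simpa using this
    have hAnull : σ {t : ℝ | 0 < ρ {t}} = 0 := by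
      have h0 : ∀ x ∈ {t : ℝ | 0 < ρ {t}}, σ {x} = 0 := by
        intro x hx
        simp only [mem_setOf_eq, hρdef, Measure.restrict_apply (measurableSet_singleton x)] at hx
        have hxJ : x ∈ J := by
          by_contra hxJ
          rw [Set.singleton_inter_eq_empty.2 hxJ] at hx
          simp at hx
        rw [Set.inter_eq_self_of_subset_left (Set.singleton_subset_iff.2 hxJ)] at hx
        rcases hatom x hxJ with h | h
        · rw [h] at hx; simp at hx
        · rw [hσdef, Measure.restrict_apply (measurableSet_singleton x)]
          exact le_antisymm (le_trans (measure_mono Set.inter_subset_left) h.le) zero_le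
      calc σ {t : ℝ | 0 < ρ {t}} = σ (⋃ x ∈ {t : ℝ | 0 < ρ {t}}, {x}) := by
            rw [Set.biUnion_of_singleton]
        _ = 0 := (measure_biUnion_null_iff hA).2 h0
    refine integral_eq_zero_of_ae ?_
    have hsub : {t : ℝ | ¬ ((ρ {t}).toReal • (u t * v t) = 0)} ⊆ {t : ℝ | 0 < ρ {t}} := by
      intro t ht
      simp only [mem_setOf_eq] at ht ⊢
      rcases eq_or_ne (ρ {t}) 0 with h | h
      · exact absurd (by simp [h]) ht
      · exact h.bot_lt
    exact ae_iff.2 (measure_mono_null hsub hAnull)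
  -- converting the iterated integrals
  have hconv1 : ∫ t, (∫ s in Iio t, u s ∂ρ) * v t ∂σ
      = ∫ t in J, (∫ s in Ico α t, u s ∂μ) * v t ∂ν := by
    refine setIntegral_congr_fun hJm fun t ht => ?_
    have h1 : Iio t ∩ J = Ico α t := by
      rw [hJdef]; ext s
      simp only [mem_inter_iff, mem_Iio, mem_Ico]
      obtain ⟨ht1, ht2⟩ := ht
      constructor
      · rintro ⟨h1, h2, h3⟩; exact ⟨h2, h1⟩
      · rintro ⟨h1, h2⟩; exact ⟨h2, h1, h2.trans ht2⟩
    rw [hρdef, Measure.restrict_restrict measurableSet_Iio, h1]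
  have hconv2 : ∫ s, u s * (∫ t in Iio s, v t ∂σ) ∂ρ
      = ∫ s in J, u s * (∫ t in Ico α s, v t ∂ν) ∂μ := by
    refine setIntegral_congr_fun hJm fun s hs => ?_
    have h1 : Iio s ∩ J = Ico α s := by
      rw [hJdef]; ext t
      simp only [mem_inter_iff, mem_Iio, mem_Ico]
      obtain ⟨hs1, hs2⟩ := hs
      constructor
      · rintro ⟨h1, h2, h3⟩; exact ⟨h2, h1⟩
      · rintro ⟨h1, h2⟩; exact ⟨h2, h1, h2.trans hs2⟩
    rw [hσdef, Measure.restrict_restrict measurableSet_Iio, h1]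
  have : (∫ s, u s ∂ρ) * (∫ t, v t ∂σ)
      = (∫ t, (∫ s in Iio t, u s ∂ρ) * v t ∂σ) + ∫ s, u s * (∫ t in Iio s, v t ∂σ) ∂ρ := by
    rw [← hprod, hsplit, hT1, hT2, hT3, add_zero]
  rw [← hconv1, ← hconv2]
  exact this

lemma BMOn.congr {J : Set ℝ} {F G : ℝ → ℂ} (h : BMOn J F) (heq : ∀ t ∈ J, F t = G t) :
    BMOn J G := by
  obtain ⟨φ, hφm, hφeq, C, hC⟩ := h
  exact ⟨φ, hφm, fun t ht => (heq t ht).symm.trans (hφeq t ht), C, hC⟩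

lemma BMOn.const_add {J : Set ℝ} {F : ℝ → ℂ} (h : BMOn J F) (c : ℂ) :
    BMOn J (fun t => c + F t) := by
  obtain ⟨φ, hφm, hφeq, C, hC⟩ := h
  exact ⟨fun t => c + φ t, measurable_const.add hφm,
    fun t ht => by show c + F t = c + φ t; rw [hφeq t ht],
    ‖c‖ + C, fun t => (norm_add_le _ _).trans (by gcongr; exact hC t)⟩

lemma BMOn.add {J : Set ℝ} {F G : ℝ → ℂ} (hF : BMOn J F) (hG : BMOn J G) :
    BMOn J (fun t => F t + G t) := by
  obtain ⟨φ, hφm, hφeq, C, hC⟩ := hF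
  obtain ⟨ψ, hψm, hψeq, C', hC'⟩ := hG
  exact ⟨fun t => φ t + ψ t, hφm.add hψm,
    fun t ht => by show F t + G t = φ t + ψ t; rw [hφeq t ht, hψeq t ht],
    C + C', fun t => (norm_add_le _ _).trans (add_le_add (hC t) (hC' t))⟩

lemma BMOn.sub {J : Set ℝ} {F G : ℝ → ℂ} (hF : BMOn J F) (hG : BMOn J G) :
    BMOn J (fun t => F t - G t) := by
  obtain ⟨φ, hφm, hφeq, C, hC⟩ := hF
  obtain ⟨ψ, hψm, hψeq, C', hC'⟩ := hG
  exact ⟨fun t => φ t - ψ t, hφm.sub hψm,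
    fun t ht => by show F t - G t = φ t - ψ t; rw [hφeq t ht, hψeq t ht],
    C + C', fun t => (norm_sub_le _ _).trans (add_le_add (hC t) (hC' t))⟩

lemma oneThree {α β : ℝ} (hαβ : α ≤ β) (μ ν₁ ν₂ ν₃ : Measure ℝ)
    (hμ : μ (Ico α β) ≠ ⊤) (hν₁ : ν₁ (Ico α β) ≠ ⊤) (hν₂ : ν₂ (Ico α β) ≠ ⊤)
    (hν₃ : ν₃ (Ico α β) ≠ ⊤)
    (u v₁ v₂ v₃ F G : ℝ → ℂ)
    (hu : IntegrableOn u (Ico α β) μ)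
    (hv₁ : IntegrableOn v₁ (Ico α β) ν₁) (hv₂ : IntegrableOn v₂ (Ico α β) ν₂)
    (hv₃ : IntegrableOn v₃ (Ico α β) ν₃)
    (hF : ∀ t ∈ Icc α β, F t = F α + ∫ s in Ico α t, u s ∂μ)
    (hG : ∀ t ∈ Icc α β, G t = G α + ((∫ s in Ico α t, v₁ s ∂ν₁)
      - (∫ s in Ico α t, v₂ s ∂ν₂) + (∫ s in Ico α t, v₃ s ∂ν₃)))
    (hatom₁ : ∀ t ∈ Ico α β, μ {t} = 0 ∨ ν₁ {t} = 0)
    (hatom₂ : ∀ t ∈ Ico α β, μ {t} = 0 ∨ ν₂ {t} = 0)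
    (hatom₃ : ∀ t ∈ Ico α β, μ {t} = 0 ∨ ν₃ {t} = 0) :
    F β * G β - F α * G α
      = ((∫ t in Ico α β, F t * v₁ t ∂ν₁) - (∫ t in Ico α β, F t * v₂ t ∂ν₂)
          + ∫ t in Ico α β, F t * v₃ t ∂ν₃)
        + ∫ s in Ico α β, u s * G s ∂μ := by
  have hJm : MeasurableSet (Ico α β) := measurableSet_Ico
  have hsub : ∀ t ∈ Ico α β, Ico α t ⊆ Ico α β := fun t ht => Ico_subset_Ico_right ht.2.le
  set A : ℝ → ℂ := fun t => ∫ s in Ico α t, u s ∂μ with hAdef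
  set B₁ : ℝ → ℂ := fun t => ∫ s in Ico α t, v₁ s ∂ν₁ with hB₁def
  set B₂ : ℝ → ℂ := fun t => ∫ s in Ico α t, v₂ s ∂ν₂ with hB₂def
  set B₃ : ℝ → ℂ := fun t => ∫ s in Ico α t, v₃ s ∂ν₃ with hB₃def
  have hABM : BMOn (Ico α β) A := BMOn_prim hJm μ hμ u hu α hsub
  have hB₁BM : BMOn (Ico α β) B₁ := BMOn_prim hJm ν₁ hν₁ v₁ hv₁ α hsub
  have hB₂BM : BMOn (Ico α β) B₂ := BMOn_prim hJm ν₂ hν₂ v₂ hv₂ α hsub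
  have hB₃BM : BMOn (Ico α β) B₃ := BMOn_prim hJm ν₃ hν₃ v₃ hv₃ α hsub
  have hFBM : BMOn (Ico α β) F :=
    (hABM.const_add (F α)).congr fun t ht => (hF t (Ico_subset_Icc_self ht)).symm
  have hGBM : BMOn (Ico α β) G :=
    (((hB₁BM.sub hB₂BM).add hB₃BM).const_add (G α)).congr fun t ht =>
      (hG t (Ico_subset_Icc_self ht)).symm
  have P₁ := prodIBP0 μ ν₁ hμ hν₁ u v₁ hu hv₁ hatom₁
  have P₂ := prodIBP0 μ ν₂ hμ hν₂ u v₂ hu hv₂ hatom₂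
  have P₃ := prodIBP0 μ ν₃ hμ hν₃ u v₃ hu hv₃ hatom₃
  -- expand the F-side integrals
  have R : ∀ (ν : Measure ℝ) (v : ℝ → ℂ), ν (Ico α β) ≠ ⊤ → IntegrableOn v (Ico α β) ν →
      ∫ t in Ico α β, F t * v t ∂ν
        = F α * (∫ t in Ico α β, v t ∂ν) + ∫ t in Ico α β, A t * v t ∂ν := by
    intro ν v hν hv
    have h1 : ∫ t in Ico α β, F t * v t ∂ν = ∫ t in Ico α β, (F α * v t + A t * v t) ∂ν :=
      setIntegral_congr_fun hJm fun t ht => by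
        rw [hF t (Ico_subset_Icc_self ht)]; ring
    have e1 : ∫ t in Ico α β, (F α * v t + A t * v t) ∂ν
        = (∫ t in Ico α β, F α * v t ∂ν) + ∫ t in Ico α β, A t * v t ∂ν :=
      integral_add (hv.const_mul (F α)) (hABM.mul_integrable hJm hv)
    rw [h1, e1, integral_const_mul]
  -- expand the G-side integral
  have RG : ∫ s in Ico α β, u s * G s ∂μ
      = G α * A β + ((∫ s in Ico α β, u s * B₁ s ∂μ) - (∫ s in Ico α β, u s * B₂ s ∂μ)
          + ∫ s in Ico α β, u s * B₃ s ∂μ) := by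
    have h1 : ∫ s in Ico α β, u s * G s ∂μ
        = ∫ s in Ico α β, (G α * u s + (u s * B₁ s - u s * B₂ s + u s * B₃ s)) ∂μ :=
      setIntegral_congr_fun hJm fun s hs => by
        rw [hG s (Ico_subset_Icc_self hs)]; ring
    have hi1 : IntegrableOn (fun s => u s * B₁ s) (Ico α β) μ := by
      have := hB₁BM.mul_integrable hJm hu
      exact this.congr (ae_restrict_of_ae (Eventually.of_forall fun s => mul_comm _ _))
    have hi2 : IntegrableOn (fun s => u s * B₂ s) (Ico α β) μ := by
      have := hB₂BM.mul_integrable hJm hu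
      exact this.congr (ae_restrict_of_ae (Eventually.of_forall fun s => mul_comm _ _))
    have hi3 : IntegrableOn (fun s => u s * B₃ s) (Ico α β) μ := by
      have := hB₃BM.mul_integrable hJm hu
      exact this.congr (ae_restrict_of_ae (Eventually.of_forall fun s => mul_comm _ _))
    have e1 : ∫ s in Ico α β, (G α * u s + (u s * B₁ s - u s * B₂ s + u s * B₃ s)) ∂μ
        = (∫ s in Ico α β, G α * u s ∂μ)
          + ∫ s in Ico α β, (u s * B₁ s - u s * B₂ s + u s * B₃ s) ∂μ :=
      integral_add (hu.const_mul (G α)) (by exact (hi1.sub hi2).add hi3)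
    have e2 : ∫ s in Ico α β, (u s * B₁ s - u s * B₂ s + u s * B₃ s) ∂μ
        = (∫ s in Ico α β, (u s * B₁ s - u s * B₂ s) ∂μ) + ∫ s in Ico α β, u s * B₃ s ∂μ :=
      integral_add (by exact hi1.sub hi2) hi3
    have e3 : ∫ s in Ico α β, (u s * B₁ s - u s * B₂ s) ∂μ
        = (∫ s in Ico α β, u s * B₁ s ∂μ) - ∫ s in Ico α β, u s * B₂ s ∂μ :=
      integral_sub hi1 hi2
    rw [h1, e1, e2, e3, integral_const_mul]
  have hFβ : F β = F α + A β := hF β (right_mem_Icc.2 hαβ)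
  have hGβ : G β = G α + (B₁ β - B₂ β + B₃ β) := hG β (right_mem_Icc.2 hαβ)
  rw [R ν₁ v₁ hν₁ hv₁, R ν₂ v₂ hν₂ hv₂, R ν₃ v₃ hν₃ hv₃, RG, hFβ, hGβ]
  linear_combination P₁ - P₂ + P₃

lemma Iab_convex {a b : EReal} {p q x : ℝ} (hp : p ∈ Iab a b) (hq : q ∈ Iab a b)
    (h1 : p ≤ x) (h2 : x ≤ q) : x ∈ Iab a b :=
  ⟨lt_of_lt_of_le hp.1 (EReal.coe_le_coe_iff.2 h1),
    lt_of_le_of_lt (EReal.coe_le_coe_iff.2 h2) hq.2⟩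

lemma AC_rep (D : SLData) {h h1 : ℝ → ℂ} (hh : IsAClocOn D.I D.sgm h h1)
    {p q : ℝ} (hp : p ∈ D.I) (hq : q ∈ D.I) :
    ∀ t ∈ Icc p q, h t = h p + ∫ s in Ico p t, h1 s ∂D.sgm := by
  intro t ht
  have htI : t ∈ D.I := Iab_convex hp hq ht.1 ht.2
  have := hh.eq p hp t htI
  rwa [oInt, if_pos ht.1] at this

lemma AC_bm (D : SLData) {h h1 : ℝ → ℂ} (hh : IsAClocOn D.I D.sgm h h1)
    {p q : ℝ} (hp : p ∈ D.I) (hq : q ∈ D.I) : BMOn (Ico p q) h := by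
  have hfin : D.sgm (Ico p q) ≠ ⊤ :=
    (lt_of_le_of_lt (measure_mono Ico_subset_Icc_self) (D.h_sgm_fin p hp q hq)).ne
  exact ((BMOn_prim measurableSet_Ico D.sgm hfin h1 (hh.intOn p hp q hq) p
      (fun t ht => Ico_subset_Ico_right ht.2.le)).const_add (h p)).congr
    fun t ht => (AC_rep D hh hp hq t (Ico_subset_Icc_self ht)).symm

lemma oInt_diff (μ : Measure ℝ) (h : ℝ → ℂ) {c p x : ℝ} (hpx : p ≤ x)
    (hint : IntegrableOn h (Ico (min c p) (max c x)) μ) :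
    oInt μ h c x - oInt μ h c p = ∫ s in Ico p x, h s ∂μ := by
  have hIpx : IntegrableOn h (Ico p x) μ :=
    hint.mono_set (Ico_subset_Ico (min_le_right _ _) (le_max_right _ _))
  by_cases hcp : c ≤ p
  · have hcx : c ≤ x := hcp.trans hpx
    rw [oInt, if_pos hcx, oInt, if_pos hcp]
    have hIcp : IntegrableOn h (Ico c p) μ :=
      hint.mono_set (Ico_subset_Ico (min_le_left _ _) ((hpx.trans (le_max_right _ _))))
    rw [← Ico_union_Ico_eq_Ico hcp hpx,
      setIntegral_union (Set.Ico_disjoint_Ico_same) measurableSet_Ico hIcp hIpx]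
    ring
  · push_neg at hcp
    by_cases hcx : c ≤ x
    · rw [oInt, if_pos hcx, oInt, if_neg (not_le.2 hcp)]
      have hIpc : IntegrableOn h (Ico p c) μ :=
        hint.mono_set (Ico_subset_Ico (min_le_right _ _) (hcx.trans (le_max_right _ _)))
      have hIcx : IntegrableOn h (Ico c x) μ :=
        hint.mono_set (Ico_subset_Ico (min_le_left _ _) (le_max_right _ _))
      rw [← Ico_union_Ico_eq_Ico hcp.le hcx,
        setIntegral_union (Set.Ico_disjoint_Ico_same) measurableSet_Ico hIpc hIcx]
      ring
    · push_neg at hcx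
      rw [oInt, if_neg (not_le.2 hcx), oInt, if_neg (not_le.2 hcp)]
      have hIpc : IntegrableOn h (Ico p c) μ :=
        hint.mono_set (Ico_subset_Ico (min_le_right _ _) (le_max_left _ _))
      have hIxc : IntegrableOn h (Ico x c) μ :=
        hint.mono_set (Ico_subset_Ico (min_le_right _ _ |>.trans hpx) (le_max_left _ _))
      have : (∫ s in Ico p c, h s ∂μ) = (∫ s in Ico p x, h s ∂μ) + ∫ s in Ico x c, h s ∂μ := by
        rw [← Ico_union_Ico_eq_Ico hpx hcx.le,
          setIntegral_union (Set.Ico_disjoint_Ico_same) measurableSet_Ico hIpx hIxc]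
      linear_combination this

lemma Tloc_f1_rep (D : SLData) {f ftau f1 ftau1 : ℝ → ℂ} (hf : IsTloc D f ftau f1 ftau1)
    {p q : ℝ} (hp : p ∈ D.I) (hq : q ∈ D.I) (hpq : p ≤ q) :
    ∀ t ∈ Icc p q, f1 t = f1 p + ((∫ s in Ico p t, f s ∂D.chi)
      - (∫ s in Ico p t, ftau s ∂D.rhop) + ∫ s in Ico p t, ftau s ∂D.rhom) := by
  obtain ⟨c, hc, hsac⟩ := hf.rep
  intro t ht
  have htI : t ∈ D.I := Iab_convex hp hq ht.1 ht.2
  have heq := hsac.eq p hp t htI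
  -- the χ-difference
  have hminI : min c p ∈ D.I := by rcases min_choice c p with h | h <;> rw [h] <;> assumption
  have hmaxI : max c q ∈ D.I := by rcases max_choice c q with h | h <;> rw [h] <;> assumption
  have hminmax : min c p ≤ max c q := (min_le_left _ _).trans (le_max_left _ _)
  have hfin : D.chi (Ico (min c p) (max c q)) ≠ ⊤ :=
    (lt_of_le_of_lt (measure_mono Ico_subset_Icc_self) (D.h_chi_fin _ hminI _ hmaxI)).ne
  have hfint : IntegrableOn f (Ico (min c p) (max c q)) D.chi :=
    (AC_bm D hf.hf hminI hmaxI).integrableOn measurableSet_Ico D.chi hfin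
  have hdiff : oInt D.chi f c t - oInt D.chi f c p = ∫ s in Ico p t, f s ∂D.chi := by
    refine oInt_diff D.chi f ht.1 (hfint.mono_set (Ico_subset_Ico le_rfl ?_))
    exact max_le_max le_rfl ht.2
  have hrho : rhoOInt D ftau p t
      = (∫ s in Ico p t, ftau s ∂D.rhop) - ∫ s in Ico p t, ftau s ∂D.rhom := by
    rw [rhoOInt, oInt, if_pos ht.1, oInt, if_pos ht.1]
  rw [hrho] at heq
  linear_combination hdiff - heq

lemma Tloc_atom_chi (D : SLData) {p q : ℝ} (hp : p ∈ D.I) (hq : q ∈ D.I) :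
    ∀ t ∈ Ico p q, D.sgm {t} = 0 ∨ D.chi {t} = 0 := by
  intro t ht
  have htI : t ∈ D.I := Iab_convex hp hq ht.1 ht.2.le
  exact mul_eq_zero.1 (D.h_nopm_chi t htI)

lemma Tloc_atom_rhop (D : SLData) {p q : ℝ} (hp : p ∈ D.I) (hq : q ∈ D.I) :
    ∀ t ∈ Ico p q, D.sgm {t} = 0 ∨ D.rhop {t} = 0 := by
  intro t ht
  have htI : t ∈ D.I := Iab_convex hp hq ht.1 ht.2.le
  rcases mul_eq_zero.1 (D.h_nopm_rho t htI) with h | h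
  · exact Or.inl h
  · exact Or.inr (by simpa using (add_eq_zero.1 h).1)

lemma Tloc_atom_rhom (D : SLData) {p q : ℝ} (hp : p ∈ D.I) (hq : q ∈ D.I) :
    ∀ t ∈ Ico p q, D.sgm {t} = 0 ∨ D.rhom {t} = 0 := by
  intro t ht
  have htI : t ∈ D.I := Iab_convex hp hq ht.1 ht.2.le
  rcases mul_eq_zero.1 (D.h_nopm_rho t htI) with h | h
  · exact Or.inl h
  · exact Or.inr (by simpa using (add_eq_zero.1 h).2)

lemma my_cconj {X : Type*} [MeasurableSpace X] {μ : Measure X} {f : X → ℂ}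
    (hf : Integrable f μ) : Integrable (fun x => (starRingEnd ℂ) (f x)) μ :=
  Integrable.mono' hf.norm (Complex.continuous_conj.comp_aestronglyMeasurable hf.1)
    (Eventually.of_forall fun x => by simp)

lemma lagrange_le (D : SLData)
    (f ftau f1 ftau1 g gtau g1 gtau1 : ℝ → ℂ)
    (hf : IsTloc D f ftau f1 ftau1) (hg : IsTloc D g gtau g1 gtau1)
    (α β : ℝ) (hα : α ∈ D.I) (hβ : β ∈ D.I) (hαβ : α ≤ β) :
    VwStar ftau f1 gtau g1 β - VwStar ftau f1 gtau g1 α =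
      (∫ x in Ico α β, (ftau x * (starRingEnd ℂ) (g x) - f x * (starRingEnd ℂ) (gtau x)) ∂D.chi) +
        ∫ x in Ico α β, (ftau1 x * (starRingEnd ℂ) (g1 x)
          - f1 x * (starRingEnd ℂ) (gtau1 x)) ∂D.sgm := by
  have hJm : MeasurableSet (Ico α β) := measurableSet_Ico
  have hsub : ∀ t ∈ Ico α β, Ico α t ⊆ Ico α β := fun t ht => Ico_subset_Ico_right ht.2.le
  have hςfin : D.sgm (Ico α β) ≠ ⊤ :=
    (lt_of_le_of_lt (measure_mono Ico_subset_Icc_self) (D.h_sgm_fin α hα β hβ)).ne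
  have hχfin : D.chi (Ico α β) ≠ ⊤ :=
    (lt_of_le_of_lt (measure_mono Ico_subset_Icc_self) (D.h_chi_fin α hα β hβ)).ne
  have hpfin : D.rhop (Ico α β) ≠ ⊤ :=
    (lt_of_le_of_lt (measure_mono Ico_subset_Icc_self) (D.h_rhop_fin α hα β hβ)).ne
  have hmfin : D.rhom (Ico α β) ≠ ⊤ :=
    (lt_of_le_of_lt (measure_mono Ico_subset_Icc_self) (D.h_rhom_fin α hα β hβ)).ne
  -- bounded measurable functions
  have bmf : BMOn (Ico α β) f := AC_bm D hf.hf hα hβ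
  have bmftau : BMOn (Ico α β) ftau := AC_bm D hf.hftau hα hβ
  have bmg' : BMOn (Ico α β) (fun t => (starRingEnd ℂ) (g t)) := (AC_bm D hg.hf hα hβ).conj
  have bmgtau' : BMOn (Ico α β) (fun t => (starRingEnd ℂ) (gtau t)) :=
    (AC_bm D hg.hftau hα hβ).conj
  -- integrabilities
  have hif : IntegrableOn f (Ico α β) D.chi := bmf.integrableOn hJm D.chi hχfin
  have hig' : IntegrableOn (fun t => (starRingEnd ℂ) (g t)) (Ico α β) D.chi :=
    bmg'.integrableOn hJm D.chi hχfin
  have hiftau_p : IntegrableOn ftau (Ico α β) D.rhop := bmftau.integrableOn hJm D.rhop hpfin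
  have hiftau_m : IntegrableOn ftau (Ico α β) D.rhom := bmftau.integrableOn hJm D.rhom hmfin
  have higtau_p : IntegrableOn (fun t => (starRingEnd ℂ) (gtau t)) (Ico α β) D.rhop :=
    bmgtau'.integrableOn hJm D.rhop hpfin
  have higtau_m : IntegrableOn (fun t => (starRingEnd ℂ) (gtau t)) (Ico α β) D.rhom :=
    bmgtau'.integrableOn hJm D.rhom hmfin
  have hiftau1 : IntegrableOn ftau1 (Ico α β) D.sgm := hf.hftau.intOn α hα β hβ
  have higtau1' : IntegrableOn (fun t => (starRingEnd ℂ) (gtau1 t)) (Ico α β) D.sgm :=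
    my_cconj (hg.hftau.intOn α hα β hβ)
  -- BM for the quasi-derivatives
  have bmf1 : BMOn (Ico α β) f1 :=
    ((((BMOn_prim hJm D.chi hχfin f hif α hsub).sub
        (BMOn_prim hJm D.rhop hpfin ftau hiftau_p α hsub)).add
        (BMOn_prim hJm D.rhom hmfin ftau hiftau_m α hsub)).const_add (f1 α)).congr
      fun t ht => (Tloc_f1_rep D hf hα hβ hαβ t (Ico_subset_Icc_self ht)).symm
  -- conjugated representation for g1
  have hg1rep : ∀ t ∈ Icc α β, (starRingEnd ℂ) (g1 t) = (starRingEnd ℂ) (g1 α)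
      + ((∫ s in Ico α t, (starRingEnd ℂ) (g s) ∂D.chi)
        - (∫ s in Ico α t, (starRingEnd ℂ) (gtau s) ∂D.rhop)
        + ∫ s in Ico α t, (starRingEnd ℂ) (gtau s) ∂D.rhom) := by
    intro t ht
    have h0 := Tloc_f1_rep D hg hα hβ hαβ t ht
    rw [h0]
    rw [map_add, map_add, map_sub, ← integral_conj, ← integral_conj, ← integral_conj]
  have big1 : IntegrableOn (fun t => (starRingEnd ℂ) (g t)) (Ico α β) D.chi := hig'
  have bmg1' : BMOn (Ico α β) (fun t => (starRingEnd ℂ) (g1 t)) :=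
    ((((BMOn_prim hJm D.chi hχfin _ hig' α hsub).sub
        (BMOn_prim hJm D.rhop hpfin _ higtau_p α hsub)).add
        (BMOn_prim hJm D.rhom hmfin _ higtau_m α hsub)).const_add
          ((starRingEnd ℂ) (g1 α))).congr
      fun t ht => (hg1rep t (Ico_subset_Icc_self ht)).symm
  -- conjugated representation for gtau
  have hgtaurep : ∀ t ∈ Icc α β, (starRingEnd ℂ) (gtau t) = (starRingEnd ℂ) (gtau α)
      + ∫ s in Ico α t, (starRingEnd ℂ) (gtau1 s) ∂D.sgm := by
    intro t ht
    rw [AC_rep D hg.hftau hα hβ t ht, map_add, ← integral_conj]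
  -- the two integration-by-parts identities
  have T1 := oneThree hαβ D.sgm D.chi D.rhop D.rhom hςfin hχfin hpfin hmfin
    ftau1 (fun t => (starRingEnd ℂ) (g t)) (fun t => (starRingEnd ℂ) (gtau t))
    (fun t => (starRingEnd ℂ) (gtau t)) ftau (fun t => (starRingEnd ℂ) (g1 t))
    hiftau1 hig' higtau_p higtau_m (AC_rep D hf.hftau hα hβ) hg1rep
    (Tloc_atom_chi D hα hβ) (Tloc_atom_rhop D hα hβ) (Tloc_atom_rhom D hα hβ)
  have T2 := oneThree hαβ D.sgm D.chi D.rhop D.rhom hςfin hχfin hpfin hmfin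
    (fun t => (starRingEnd ℂ) (gtau1 t)) f ftau ftau
    (fun t => (starRingEnd ℂ) (gtau t)) f1
    higtau1' hif hiftau_p hiftau_m hgtaurep (Tloc_f1_rep D hf hα hβ hαβ)
    (Tloc_atom_chi D hα hβ) (Tloc_atom_rhop D hα hβ) (Tloc_atom_rhom D hα hβ)
  -- splitting the goal integrals
  have hsplitχ : ∫ x in Ico α β, (ftau x * (starRingEnd ℂ) (g x)
        - f x * (starRingEnd ℂ) (gtau x)) ∂D.chi
      = (∫ x in Ico α β, ftau x * (starRingEnd ℂ) (g x) ∂D.chi)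
        - ∫ x in Ico α β, f x * (starRingEnd ℂ) (gtau x) ∂D.chi :=
    integral_sub ((bmftau.mul bmg').integrableOn hJm D.chi hχfin)
      ((bmf.mul bmgtau').integrableOn hJm D.chi hχfin)
  have hi1 : IntegrableOn (fun t => ftau1 t * (starRingEnd ℂ) (g1 t)) (Ico α β) D.sgm := by
    have := bmg1'.mul_integrable hJm hiftau1
    exact this.congr (ae_restrict_of_ae (Eventually.of_forall fun s => mul_comm _ _))
  have hi2 : IntegrableOn (fun t => f1 t * (starRingEnd ℂ) (gtau1 t)) (Ico α β) D.sgm :=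
    bmf1.mul_integrable hJm higtau1'
  have hsplitς : ∫ x in Ico α β, (ftau1 x * (starRingEnd ℂ) (g1 x)
        - f1 x * (starRingEnd ℂ) (gtau1 x)) ∂D.sgm
      = (∫ x in Ico α β, ftau1 x * (starRingEnd ℂ) (g1 x) ∂D.sgm)
        - ∫ x in Ico α β, f1 x * (starRingEnd ℂ) (gtau1 x) ∂D.sgm :=
    integral_sub hi1 hi2
  -- commutations
  have c1 : ∫ t in Ico α β, (starRingEnd ℂ) (gtau t) * f t ∂D.chi
      = ∫ t in Ico α β, f t * (starRingEnd ℂ) (gtau t) ∂D.chi :=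
    setIntegral_congr_fun hJm fun t _ => mul_comm _ _
  have c2p : ∫ t in Ico α β, (starRingEnd ℂ) (gtau t) * ftau t ∂D.rhop
      = ∫ t in Ico α β, ftau t * (starRingEnd ℂ) (gtau t) ∂D.rhop :=
    setIntegral_congr_fun hJm fun t _ => mul_comm _ _
  have c2m : ∫ t in Ico α β, (starRingEnd ℂ) (gtau t) * ftau t ∂D.rhom
      = ∫ t in Ico α β, ftau t * (starRingEnd ℂ) (gtau t) ∂D.rhom :=
    setIntegral_congr_fun hJm fun t _ => mul_comm _ _
  have c3 : ∫ t in Ico α β, (starRingEnd ℂ) (gtau1 t) * f1 t ∂D.sgm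
      = ∫ t in Ico α β, f1 t * (starRingEnd ℂ) (gtau1 t) ∂D.sgm :=
    setIntegral_congr_fun hJm fun t _ => mul_comm _ _
  simp only [VwStar, cg]
  rw [hsplitχ, hsplitς]
  linear_combination T1 - T2 - c1 + c2p - c2m - c3

end LagrangeAux

/-- **Lagrange identity.** For every `f = (f,fτ)`, `g = (g,gτ)` in `T_loc` (with
quasi-derivatives `f1, fτ1, g1, gτ1`) and all `α, β ∈ (a,b)`:
`V(f,g*)(β) - V(f,g*)(α) = ∫_α^β (fτ g* - f gτ*) dχ + ∫_α^β (fτ¹ g¹* - f¹ gτ¹*) dς`. -/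
theorem lagrange_identity (D : SLData)
    (f ftau f1 ftau1 g gtau g1 gtau1 : ℝ → ℂ)
    (hf : IsTloc D f ftau f1 ftau1) (hg : IsTloc D g gtau g1 gtau1)
    (α β : ℝ) (hα : α ∈ D.I) (hβ : β ∈ D.I) :
    VwStar ftau f1 gtau g1 β - VwStar ftau f1 gtau g1 α =
      oInt D.chi (fun x => ftau x * cg (g x) - f x * cg (gtau x)) α β +
        oInt D.sgm (fun x => ftau1 x * cg (g1 x) - f1 x * cg (gtau1 x)) α β := by
  rcases le_or_gt α β with h | h
  · have key := lagrange_le D f ftau f1 ftau1 g gtau g1 gtau1 hf hg α β hα hβ h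
    simp only [cg] at key ⊢
    unfold oInt
    rw [if_pos h, if_pos h]
    exact key
  · have key := lagrange_le D f ftau f1 ftau1 g gtau g1 gtau1 hf hg β α hβ hα h.le
    simp only [cg] at key ⊢
    unfold oInt
    rw [if_neg (not_le.2 h), if_neg (not_le.2 h)]
    linear_combination -key
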